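/- arXiv:2412.18740 — 12 statements merged into one kernel-verified Lean document; each statement's English description precedes it below -/
import Mathlib

section
/- Let F be a countably union-closed family of sets. If (F, ⊆) satisfies the descending chain condition, then the family N(F) = {F_x : x ∈ U_F}, ordered by inclusion, satisfies the ascending chain condition. -/
/-!
An ascending chain `F_{x₀} ⊊ F_{x₁} ⊊ ⋯` yields sets `Aₙ ∈ F_{x_{n+1}} \ F_{xₙ}`. Monotonicity of
the chain forces `x_{n+1} ∉ A_k` for every `k > n`, so the tail unions `Bₙ = ⋃_{k ≥ n} A_k`, which lie
in `F` by countable union-closedness, form a strictly descending chain `B₀ ⊋ B₁ ⊋ ⋯` witnessed by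
`x_{n+1} ∈ Bₙ \ B_{n+1}`. This contradicts the DCC.
-/

section

variable {α : Type*}

theorem strictAnti_iUnion_tail {A : ℕ → Set α} {y : ℕ → α} (hmem : ∀ n, y n ∈ A n)
    (hnot_mem : ∀ n k, n < k → y n ∉ A k) : StrictAnti fun n => ⋃ k, A (k + n) := by
  refine strictAnti_nat_of_succ_lt fun n => Set.ssubset_iff_of_subset ?_ |>.mpr ⟨y n, ?_, ?_⟩
  · exact Set.iUnion_subset fun k =>
      Set.subset_iUnion_of_subset (k + 1) (by rw [Nat.add_right_comm, Nat.add_assoc])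
  · exact Set.mem_iUnion.mpr ⟨0, by simpa using hmem n⟩
  · simp only [Set.mem_iUnion, not_exists]
    exact fun k => hnot_mem n (k + (n + 1)) (by omega)

theorem exists_strictAnti_of_strictMono_setOf_mem {F : Set (Set α)}
    (hCUC : ∀ f : ℕ → Set α, (∀ n, f n ∈ F) → (⋃ n, f n) ∈ F) {x : ℕ → α}
    (hx : StrictMono fun n => {A ∈ F | x n ∈ A}) :
    ∃ B : ℕ → Set α, (∀ n, B n ∈ F) ∧ StrictAnti B := by
  choose A hA hA_not_mem using fun n => Set.exists_of_ssubset (hx (Nat.lt_succ_self n))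
  have hnot_mem : ∀ m k, m ≤ k → x m ∉ A k := fun m k hmk hxm =>
    hA_not_mem k (hx.monotone hmk ⟨(hA k).1, hxm⟩)
  exact ⟨fun n => ⋃ k, A (k + n), fun n => hCUC _ fun k => (hA (k + n)).1,
    strictAnti_iUnion_tail (y := fun n => x (n + 1)) (fun n => (hA n).2)
      fun n k hnk => hnot_mem (n + 1) k hnk⟩

theorem not_strictAnti_of_forall_exists_minimal {F : Set (Set α)}
    (hDCC : ∀ S ⊆ F, S.Nonempty → ∃ M ∈ S, ∀ B ∈ S, B ⊆ M → B = M) {B : ℕ → Set α}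
    (hBF : ∀ n, B n ∈ F) : ¬StrictAnti B := by
  intro hB
  obtain ⟨_, ⟨n, rfl⟩, hmin⟩ :=
    hDCC (Set.range B) (Set.range_subset_iff.mpr hBF) (Set.range_nonempty B)
  exact (hB n.lt_succ_self).ne (hmin _ ⟨n + 1, rfl⟩ (hB n.lt_succ_self).le)

end

/-- If `F` is countably union-closed and `(F, ⊆)` satisfies DCC, then
`N(F) = {F_x : x ∈ U_F}` ordered by inclusion satisfies ACC. -/
theorem stmt_2 {α : Type*} (F : Set (Set α))
    (hCUC : ∀ f : ℕ → Set α, (∀ n, f n ∈ F) → (⋃ n, f n) ∈ F)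
    (hDCC : ∀ S ⊆ F, S.Nonempty → ∃ M ∈ S, ∀ B ∈ S, B ⊆ M → B = M) :
    ∀ 𝒮 ⊆ {N : Set (Set α) | ∃ x ∈ ⋃₀ F, N = {A ∈ F | x ∈ A}},
      𝒮.Nonempty → ∃ M ∈ 𝒮, ∀ N ∈ 𝒮, M ⊆ N → N = M := by
  intro 𝒮 h𝒮 hne
  by_contra! hmax
  have : Nonempty 𝒮 := hne.to_subtype
  have : NoMaxOrder 𝒮 := ⟨fun M => by
    obtain ⟨N, hN, hMN, hNM⟩ := hmax M M.2
    exact ⟨⟨N, hN⟩, (hMN.ssubset_of_ne hNM.symm : M.1 < N)⟩⟩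
  obtain ⟨N, hN⟩ := Nat.exists_strictMono 𝒮
  choose x _ hx using fun n => h𝒮 (N n).2
  have hx_mono : StrictMono fun n => {A ∈ F | x n ∈ A} := by
    rw [← funext hx]
    exact fun m n hmn => hN hmn
  obtain ⟨B, hBF, hB⟩ := exists_strictAnti_of_strictMono_setOf_mem hCUC hx_mono
  exact not_strictAnti_of_forall_exists_minimal hDCC hBF hB
end

section
/- Let F be a countably union-closed family of sets whose poset under inclusion satisfies the descending chain condition. Then for every a ∈ U_F there exists an optimal element b ∈ U_F with F_a ⊆ F_b. -/
/-!
If no element above `a` were optimal, there would be points `x₀ = a, x₁, x₂, …` whose families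
`F_{xₙ}` increase strictly. Choosing `Aₙ ∈ F` with `xₙ₊₁ ∈ Aₙ` and `xₙ ∉ Aₙ`, the tails
`Gₙ = ⋃_{k ≥ n} A_k` lie in `F` by countable union-closedness, and `xₙ₊₁ ∈ Gₙ \ Gₙ₊₁`, so they
form a strictly descending chain in `F`, contradicting DCC.
-/

open Set

section

variable {α : Type*} (F : Set (Set α))

def familyThrough (x : α) : Set (Set α) := {A ∈ F | x ∈ A}

variable {F}

theorem exists_mem_notMem_of_familyThrough_ssubset {x y : α}
    (h : familyThrough F x ⊂ familyThrough F y) : ∃ A ∈ F, y ∈ A ∧ x ∉ A := by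
  obtain ⟨A, ⟨hAF, hyA⟩, hxA⟩ := Set.not_subset.1 h.2
  exact ⟨A, hAF, hyA, fun hxA' => hxA ⟨hAF, hxA'⟩⟩

theorem exists_strictAnti_of_strictMono_familyThrough
    (hCUC : ∀ f : ℕ → Set α, (∀ n, f n ∈ F) → (⋃ n, f n) ∈ F)
    {x : ℕ → α} (hx : StrictMono fun n => familyThrough F (x n)) :
    ∃ G : ℕ → Set α, (∀ n, G n ∈ F) ∧ StrictAnti G := by
  choose A hAF hxA hxA' using fun n : ℕ =>
    exists_mem_notMem_of_familyThrough_ssubset (hx n.lt_succ_self)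
  have notMem_of_le {m n : ℕ} (hmn : m ≤ n) : x m ∉ A n := fun h =>
    hxA' n (hx.monotone hmn ⟨hAF n, h⟩).2
  refine ⟨fun n => ⋃ k, A (n + k), fun n => hCUC _ fun k => hAF _, ?_⟩
  refine strictAnti_nat_of_succ_lt fun n => ?_
  have hsub : ⋃ k, A (n + 1 + k) ⊆ ⋃ k, A (n + k) :=
    iUnion_subset fun k => subset_iUnion_of_subset (k + 1) (by rw [add_right_comm, add_assoc])
  refine (ssubset_iff_of_subset hsub).2 ⟨x (n + 1), mem_iUnion.2 ⟨0, hxA n⟩, ?_⟩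
  rw [mem_iUnion, not_exists]
  exact fun k => notMem_of_le (Nat.le_add_right _ k)

theorem not_strictAnti_of_forall_exists_minimal_s3 {β : Type*} [PartialOrder β] {S : Set β}
    (hDCC : ∀ T ⊆ S, T.Nonempty → ∃ M ∈ T, ∀ B ∈ T, B ≤ M → B = M)
    {G : ℕ → β} (hGS : ∀ n, G n ∈ S) : ¬ StrictAnti G := by
  intro hG
  obtain ⟨_, ⟨n, rfl⟩, hmin⟩ := hDCC (range G) (range_subset_iff.2 hGS) (range_nonempty G)
  exact (hG n.lt_succ_self).ne (hmin _ (mem_range_self _) (hG n.lt_succ_self).le)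

theorem wellFounded_familyThrough_ssupset
    (hCUC : ∀ f : ℕ → Set α, (∀ n, f n ∈ F) → (⋃ n, f n) ∈ F)
    (hDCC : ∀ S ⊆ F, S.Nonempty → ∃ M ∈ S, ∀ B ∈ S, B ⊆ M → B = M) :
    WellFounded fun y x : α => familyThrough F x ⊂ familyThrough F y := by
  refine wellFounded_iff_isEmpty_descending_chain.2 ⟨fun ⟨x, hx⟩ => ?_⟩
  obtain ⟨G, hGF, hG⟩ :=
    exists_strictAnti_of_strictMono_familyThrough hCUC (strictMono_nat_of_lt_succ hx)
  exact not_strictAnti_of_forall_exists_minimal_s3 hDCC hGF hG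

end

/-- If `F` is countably union-closed and `(F, ⊆)` satisfies DCC, then for every
`a ∈ U_F` there exists an optimal `b ∈ U_F` with `F_a ⊆ F_b`. -/
theorem stmt_3 {α : Type*} (F : Set (Set α))
    (hCUC : ∀ f : ℕ → Set α, (∀ n, f n ∈ F) → (⋃ n, f n) ∈ F)
    (hDCC : ∀ S ⊆ F, S.Nonempty → ∃ M ∈ S, ∀ B ∈ S, B ⊆ M → B = M) :
    ∀ a ∈ ⋃₀ F, ∃ b ∈ ⋃₀ F,
      {A ∈ F | a ∈ A} ⊆ {A ∈ F | b ∈ A} ∧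
      (∀ y ∈ ⋃₀ F, {A ∈ F | b ∈ A} ⊆ {A ∈ F | y ∈ A} →
        {A ∈ F | y ∈ A} = {A ∈ F | b ∈ A}) := by
  intro a ha
  obtain ⟨b, ⟨hb, hab⟩, hmax⟩ := (wellFounded_familyThrough_ssupset hCUC hDCC).has_min
    {x ∈ ⋃₀ F | familyThrough F a ⊆ familyThrough F x} ⟨a, ha, subset_rfl⟩
  refine ⟨b, hb, hab, fun y hy hby => ?_⟩
  exact (hby.eq_of_not_ssubset (hmax y ⟨hy, hab.trans hby⟩)).symm
end

section
/- Let F be a union-closed family whose poset under inclusion satisfies DCC, and let x ∈ U_F. If there exists A ∈ F not containing x with A ∪ {x} ∉ F, then there exists B ∈ F not containing x, minimal among members of F not containing x, such that B ∪ {x} ∉ F. -/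
/-! Among the members `A` of `F` with `x ∉ A` and `A ∪ {x} ∉ F`, DCC provides a minimal one, `B`.
The condition `A ∪ {x} ∉ F` passes to members `C ⊆ B` of `F`: otherwise
`B ∪ (C ∪ {x}) = B ∪ {x}` would lie in `F` by union-closedness. Hence `B` is even minimal
among all members of `F` avoiding `x`. -/

theorem union_singleton_notMem_of_subset {α : Type*} {F : Set (Set α)}
    (hUC : ∀ A ∈ F, ∀ B ∈ F, A ∪ B ∈ F) {x : α} {B C : Set α}
    (hB : B ∈ F) (hCB : C ⊆ B) (hBx : B ∪ {x} ∉ F) : C ∪ {x} ∉ F := by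
  intro hCx
  have hunion : B ∪ (C ∪ {x}) = B ∪ {x} := by
    rw [← Set.union_assoc, Set.union_eq_self_of_subset_right hCB]
  exact hBx (hunion ▸ hUC B hB (C ∪ {x}) hCx)

theorem stmt_5_general {α : Type*} (F : Set (Set α))
    (hUC : ∀ A ∈ F, ∀ B ∈ F, A ∪ B ∈ F)
    (hDCC : ∀ S ⊆ F, S.Nonempty → ∃ M ∈ S, ∀ B ∈ S, B ⊆ M → B = M)
    (x : α)
    (hA : ∃ A ∈ F, x ∉ A ∧ A ∪ {x} ∉ F) :
    ∃ B ∈ F, x ∉ B ∧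
      (∀ C ∈ F, x ∉ C → C ⊆ B → C = B) ∧
      B ∪ {x} ∉ F := by
  obtain ⟨B, ⟨hBF, hxB, hBx⟩, hBmin⟩ :=
    hDCC {A | A ∈ F ∧ x ∉ A ∧ A ∪ {x} ∉ F} (fun _ hA => hA.1) hA
  refine ⟨B, hBF, hxB, fun C hCF hxC hCB => ?_, hBx⟩
  exact hBmin C ⟨hCF, hxC, union_singleton_notMem_of_subset hUC hBF hCB hBx⟩ hCB

/-- If `F` is union-closed with DCC and some `A ∈ F` with `x ∉ A` has
`A ∪ {x} ∉ F`, then some minimal member `B` of `F_x^c` has `B ∪ {x} ∉ F`. -/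
theorem stmt_5 {α : Type*} (F : Set (Set α))
    (hUC : ∀ A ∈ F, ∀ B ∈ F, A ∪ B ∈ F)
    (hDCC : ∀ S ⊆ F, S.Nonempty → ∃ M ∈ S, ∀ B ∈ S, B ⊆ M → B = M)
    (x : α) (hx : x ∈ ⋃₀ F)
    (hA : ∃ A ∈ F, x ∉ A ∧ A ∪ {x} ∉ F) :
    ∃ B ∈ F, x ∉ B ∧
      (∀ C ∈ F, x ∉ C → C ⊆ B → C = B) ∧
      B ∪ {x} ∉ F :=
  stmt_5_general F hUC hDCC x hA
end

section
/- Let F be a union-closed family with DCC on inclusion, and x ∈ U_F. If A ∪ {x} ∈ F for every minimal element A of F_x^c, then x is abundant in F (i.e., there is an injection from F_x^c into F_x). -/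
/-!
Adding `x` is injective on sets avoiding `x`, so it suffices that `A ∪ {x} ∈ F` for every
`A ∈ F_x^c`. This follows by induction along the well-founded inclusion order on `F_x^c`: a
minimal `A` is the hypothesis, and otherwise some `C ∈ F_x^c` lies strictly below `A`, so
`A ∪ {x} = A ∪ (C ∪ {x})` is a union of two members of `F`.
-/

theorem Set.induction_of_minimal_mem {α : Type*} {F : Set (Set α)}
    (hDCC : ∀ S ⊆ F, S.Nonempty → ∃ M ∈ S, ∀ B ∈ S, B ⊆ M → B = M)
    {P : Set α → Prop} (step : ∀ A ∈ F, (∀ C ∈ F, C ⊂ A → P C) → P A) :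
    ∀ A ∈ F, P A := by
  by_contra! ⟨A, hA, hPA⟩
  obtain ⟨M, ⟨hMF, hPM⟩, hMmin⟩ :=
    hDCC {B | B ∈ F ∧ ¬P B} (fun B hB => hB.1) ⟨A, hA, hPA⟩
  refine hPM (step M hMF fun C hCF hCM => ?_)
  by_contra hPC
  exact hCM.ne (hMmin C ⟨hCF, hPC⟩ hCM.subset)

theorem union_singleton_mem_of_minimal {α : Type*} {F : Set (Set α)}
    (hUC : ∀ A ∈ F, ∀ B ∈ F, A ∪ B ∈ F)
    (hDCC : ∀ S ⊆ F, S.Nonempty → ∃ M ∈ S, ∀ B ∈ S, B ⊆ M → B = M) {x : α}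
    (hmin : ∀ A ∈ F, x ∉ A → (∀ C ∈ F, x ∉ C → C ⊆ A → C = A) → A ∪ {x} ∈ F) :
    ∀ A ∈ {A ∈ F | x ∉ A}, A ∪ {x} ∈ F := by
  refine Set.induction_of_minimal_mem (fun S hS => hDCC S (hS.trans fun _ h => h.1)) ?_
  rintro A ⟨hAF, hxA⟩ ih
  by_cases hAmin : ∀ C ∈ F, x ∉ C → C ⊆ A → C = A
  · exact hmin A hAF hxA hAmin
  push Not at hAmin
  obtain ⟨C, hCF, hxC, hCA, hCne⟩ := hAmin
  have hCx : C ∪ {x} ∈ F := ih C ⟨hCF, hxC⟩ (hCA.ssubset_of_ne hCne)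
  have hunion : A ∪ (C ∪ {x}) = A ∪ {x} := by
    rw [← Set.union_assoc, Set.union_eq_self_of_subset_right hCA]
  exact hunion ▸ hUC A hAF _ hCx

theorem Set.union_singleton_injOn {α : Type*} (x : α) :
    Set.InjOn (· ∪ {x}) {A : Set α | x ∉ A} := by
  intro A hxA B hxB h
  rw [← Set.insert_sdiff_self_of_notMem hxA, ← Set.insert_sdiff_self_of_notMem hxB]
  simpa only [Set.union_singleton] using congrArg (· \ {x}) h

theorem stmt_6_general {α : Type*} (F : Set (Set α))
    (hUC : ∀ A ∈ F, ∀ B ∈ F, A ∪ B ∈ F)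
    (hDCC : ∀ S ⊆ F, S.Nonempty → ∃ M ∈ S, ∀ B ∈ S, B ⊆ M → B = M)
    (x : α)
    (hmin : ∀ A ∈ F, x ∉ A → (∀ C ∈ F, x ∉ C → C ⊆ A → C = A) → A ∪ {x} ∈ F) :
    ∃ f : {A : Set α // A ∈ F ∧ x ∉ A} → {A : Set α // A ∈ F ∧ x ∈ A},
      Function.Injective f := by
  have hmem := union_singleton_mem_of_minimal hUC hDCC hmin
  refine ⟨fun A => ⟨A.1 ∪ {x}, hmem A.1 A.2, Or.inr rfl⟩, fun A B h => ?_⟩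
  exact Subtype.ext (Set.union_singleton_injOn x A.2.2 B.2.2 (congrArg Subtype.val h))

/-- If `F` is union-closed with DCC and `A ∪ {x} ∈ F` for every minimal member
`A` of `F_x^c`, then `x` is abundant in `F`. -/
theorem stmt_6 {α : Type*} (F : Set (Set α))
    (hUC : ∀ A ∈ F, ∀ B ∈ F, A ∪ B ∈ F)
    (hDCC : ∀ S ⊆ F, S.Nonempty → ∃ M ∈ S, ∀ B ∈ S, B ⊆ M → B = M)
    (x : α) (hx : x ∈ ⋃₀ F)
    (hmin : ∀ A ∈ F, x ∉ A → (∀ C ∈ F, x ∉ C → C ⊆ A → C = A) → A ∪ {x} ∈ F) :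
    ∃ f : {A : Set α // A ∈ F ∧ x ∉ A} → {A : Set α // A ∈ F ∧ x ∈ A},
      Function.Injective f :=
  stmt_6_general F hUC hDCC x hmin
end

section
/- If F is a nontrivial union-closed family of dimension at most one, then every element of U_F is abundant in F; moreover every x ∈ U_F belongs to all but at most one member of F. -/
open Set

section SupClosed

variable {L : Type*} [SemilatticeSup L] {F : Set L}

theorem SupClosed.eq_of_sup_lt (hF : SupClosed F)
    (hdim : ∀ a ∈ F, ∀ b ∈ F, ∀ c ∈ F, a < b → b < c → False)
    {a b c : L} (ha : a ∈ F) (hb : b ∈ F) (hc : c ∈ F) (hlt : a ⊔ b < c) : a = b := by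
  have eq_sup {d : L} (hd : d ∈ F) (hle : d ≤ a ⊔ b) : d = a ⊔ b := by
    by_contra hne
    exact hdim d hd _ (hF ha hb) c hc (lt_of_le_of_ne hle hne) hlt
  exact (eq_sup ha le_sup_left).trans (eq_sup hb le_sup_right).symm

end SupClosed

-- `A ∪ B ⊂ A ∪ B ∪ C` whenever `A, B` avoid `x` and `x ∈ C`, so two such `A, B` coincide.
theorem SupClosed.subsingleton_setOf_notMem {α : Type*} {F : Set (Set α)} (hF : SupClosed F)
    (hdim : ∀ A ∈ F, ∀ B ∈ F, ∀ C ∈ F, A ⊂ B → B ⊂ C → False)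
    {x : α} {C : Set α} (hC : C ∈ F) (hxC : x ∈ C) : {A ∈ F | x ∉ A}.Subsingleton := by
  rintro A ⟨hA, hxA⟩ B ⟨hB, hxB⟩
  refine hF.eq_of_sup_lt hdim hA hB (hF (hF hA hB) hC) (left_lt_sup.2 fun hCAB => ?_)
  rcases hCAB hxC with hx | hx
  exacts [hxA hx, hxB hx]

theorem stmt_9_general {α : Type*} (F : Set (Set α))
    (hUC : ∀ A ∈ F, ∀ B ∈ F, A ∪ B ∈ F)
    (hdim : ∀ A ∈ F, ∀ B ∈ F, ∀ C ∈ F, A ⊂ B → B ⊂ C → False) :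
    ∀ x ∈ ⋃₀ F,
      (∃ f : {A : Set α // A ∈ F ∧ x ∉ A} → {A : Set α // A ∈ F ∧ x ∈ A},
        Function.Injective f) ∧
      {A ∈ F | x ∉ A}.Subsingleton := by
  rintro x ⟨C, hC, hxC⟩
  have hsub : {A ∈ F | x ∉ A}.Subsingleton :=
    SupClosed.subsingleton_setOf_notMem hUC hdim hC hxC
  have : Subsingleton {A : Set α // A ∈ F ∧ x ∉ A} := hsub.coe_sort
  exact ⟨⟨fun _ => ⟨C, hC, hxC⟩, Function.injective_of_subsingleton _⟩, hsub⟩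

/-- If `F` is a nontrivial union-closed family of dimension at most one
(no strict 3-chain), then every element of `U_F` is abundant in `F`, and
every `x ∈ U_F` belongs to all but at most one member of `F`. -/
theorem stmt_9 {α : Type*} (F : Set (Set α))
    (hne : F.Nonempty) (hU : (⋃₀ F).Nonempty)
    (hUC : ∀ A ∈ F, ∀ B ∈ F, A ∪ B ∈ F)
    (hdim : ∀ A ∈ F, ∀ B ∈ F, ∀ C ∈ F, A ⊂ B → B ⊂ C → False) :
    ∀ x ∈ ⋃₀ F,
      (∃ f : {A : Set α // A ∈ F ∧ x ∉ A} → {A : Set α // A ∈ F ∧ x ∈ A},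
        Function.Injective f) ∧
      {A ∈ F | x ∉ A}.Subsingleton :=
  stmt_9_general F hUC hdim
end

section
/- Let F be a separating union-closed family and x ∈ U_F an optimal element. Then the intersection I_x = ⋂_{A ∈ F_x} A equals {x}. -/
theorem stmt_10_general {α : Type*} (F : Set (Set α))
    (hsep : ∀ x ∈ ⋃₀ F, ∀ y ∈ ⋃₀ F,
      {A ∈ F | x ∈ A} = {A ∈ F | y ∈ A} → x = y)
    (x : α) (hx : x ∈ ⋃₀ F)
    (hopt : ∀ y ∈ ⋃₀ F, {A ∈ F | x ∈ A} ⊆ {A ∈ F | y ∈ A} →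
      {A ∈ F | y ∈ A} = {A ∈ F | x ∈ A}) :
    ⋂₀ {A | A ∈ F ∧ x ∈ A} = {x} := by
  refine Set.eq_singleton_iff_unique_mem.2 ⟨fun A hA => hA.2, fun y hy => ?_⟩
  obtain ⟨A, hA, hxA⟩ := hx
  have hyU : y ∈ ⋃₀ F := ⟨A, hA, hy A ⟨hA, hxA⟩⟩
  have hFxy : {A ∈ F | x ∈ A} ⊆ {A ∈ F | y ∈ A} := fun B hB => ⟨hB.1, hy B hB⟩
  exact hsep y hyU x ⟨A, hA, hxA⟩ (hopt y hyU hFxy)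

/-- If `F` is a separating union-closed family and `x ∈ U_F` is optimal, then
`⋂_{A ∈ F_x} A = {x}`. -/
theorem stmt_10 {α : Type*} (F : Set (Set α))
    (hUC : ∀ A ∈ F, ∀ B ∈ F, A ∪ B ∈ F)
    (hsep : ∀ x ∈ ⋃₀ F, ∀ y ∈ ⋃₀ F,
      {A ∈ F | x ∈ A} = {A ∈ F | y ∈ A} → x = y)
    (x : α) (hx : x ∈ ⋃₀ F)
    (hopt : ∀ y ∈ ⋃₀ F, {A ∈ F | x ∈ A} ⊆ {A ∈ F | y ∈ A} →
      {A ∈ F | y ∈ A} = {A ∈ F | x ∈ A}) :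
    ⋂₀ {A | A ∈ F ∧ x ∈ A} = {x} :=
  stmt_10_general F hsep x hx hopt
end

section
/- Let F be a separating union-closed family with x ∈ U_F optimal. If A ∈ F with x ∉ A satisfies A ∪ X = U_F for all X ∈ F_x, then U_F = A ∪ {x}. -/
/- Every `y ∈ U_F` outside `A` lies in each member of `F_x`, since that member must cover
`U_F \ A`. So `F_x ⊆ F_y`, optimality of `x` upgrades this to `F_y = F_x`, and separation
gives `y = x`. -/

theorem setOf_mem_subset_setOf_mem_of_union_eq {α : Type*} {F : Set (Set α)} {A : Set α}
    {x y : α} (hcov : ∀ X ∈ F, x ∈ X → A ∪ X = ⋃₀ F) (hy : y ∈ ⋃₀ F) (hyA : y ∉ A) :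
    {X ∈ F | x ∈ X} ⊆ {X ∈ F | y ∈ X} := by
  rintro X ⟨hXF, hxX⟩
  have hyAX : y ∈ A ∪ X := hcov X hXF hxX ▸ hy
  exact ⟨hXF, hyAX.resolve_left hyA⟩

theorem stmt_11_general {α : Type*} (F : Set (Set α))
    (hsep : ∀ x ∈ ⋃₀ F, ∀ y ∈ ⋃₀ F,
      {A ∈ F | x ∈ A} = {A ∈ F | y ∈ A} → x = y)
    (x : α) (hx : x ∈ ⋃₀ F)
    (hopt : ∀ y ∈ ⋃₀ F, {A ∈ F | x ∈ A} ⊆ {A ∈ F | y ∈ A} →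
      {A ∈ F | y ∈ A} = {A ∈ F | x ∈ A})
    (A : Set α) (hA : A ∈ F)
    (hcov : ∀ X ∈ F, x ∈ X → A ∪ X = ⋃₀ F) :
    ⋃₀ F = A ∪ {x} := by
  refine Set.Subset.antisymm (fun y hy => ?_) (Set.union_subset (Set.subset_sUnion_of_mem hA) ?_)
  · by_cases hyA : y ∈ A
    · exact Or.inl hyA
    · have hFxy := hopt y hy (setOf_mem_subset_setOf_mem_of_union_eq hcov hy hyA)
      exact Or.inr (hsep x hx y hy hFxy.symm).symm
  · exact Set.singleton_subset_iff.mpr hx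

/-- If `F` is separating and union-closed, `x ∈ U_F` is optimal, and `A ∈ F`
with `x ∉ A` satisfies `A ∪ X = U_F` for all `X ∈ F_x`, then `U_F = A ∪ {x}`. -/
theorem stmt_11 {α : Type*} (F : Set (Set α))
    (hUC : ∀ A ∈ F, ∀ B ∈ F, A ∪ B ∈ F)
    (hsep : ∀ x ∈ ⋃₀ F, ∀ y ∈ ⋃₀ F,
      {A ∈ F | x ∈ A} = {A ∈ F | y ∈ A} → x = y)
    (x : α) (hx : x ∈ ⋃₀ F)
    (hopt : ∀ y ∈ ⋃₀ F, {A ∈ F | x ∈ A} ⊆ {A ∈ F | y ∈ A} →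
      {A ∈ F | y ∈ A} = {A ∈ F | x ∈ A})
    (A : Set α) (hA : A ∈ F) (hxA : x ∉ A)
    (hcov : ∀ X ∈ F, x ∈ X → A ∪ X = ⋃₀ F) :
    ⋃₀ F = A ∪ {x} :=
  stmt_11_general F hsep x hx hopt A hA hcov
end

section
/- If F is a union-closed family of sets and x ∈ U_F, then every member of F_x covers at most one member of F_x^c in the inclusion order on F. -/
section CoverWithin

variable {α : Type*} [PartialOrder α] {F : Set α} {a b c : α}

def CovByWithin (F : Set α) (a b : α) : Prop :=
  a < b ∧ ∀ c ∈ F, a < c → c < b → False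

theorem CovByWithin.eq_of_le_of_lt (h : CovByWithin F a b) (hc : c ∈ F) (hac : a ≤ c)
    (hcb : c < b) : c = a :=
  by_contra fun hne => h.2 c hc (lt_of_le_of_ne hac (Ne.symm hne)) hcb

end CoverWithin

theorem CovByWithin.eq_of_sup_lt {α : Type*} [SemilatticeSup α] {F : Set α} (hF : SupClosed F)
    {a₁ a₂ b : α} (ha₁ : a₁ ∈ F) (ha₂ : a₂ ∈ F) (h₁ : CovByWithin F a₁ b)
    (h₂ : CovByWithin F a₂ b) (hsup : a₁ ⊔ a₂ < b) : a₁ = a₂ := by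
  have hmem : a₁ ⊔ a₂ ∈ F := hF ha₁ ha₂
  calc a₁ = a₁ ⊔ a₂ := (h₁.eq_of_le_of_lt hmem le_sup_left hsup).symm
    _ = a₂ := h₂.eq_of_le_of_lt hmem le_sup_right hsup

theorem stmt_12_general {α : Type*} (F : Set (Set α))
    (hUC : ∀ A ∈ F, ∀ B ∈ F, A ∪ B ∈ F)
    (x : α) :
    ∀ B ∈ F, x ∈ B →
      ∀ A₁ ∈ F, x ∉ A₁ → ∀ A₂ ∈ F, x ∉ A₂ →
        (A₁ ⊂ B ∧ ∀ C ∈ F, A₁ ⊂ C → C ⊂ B → False) →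
        (A₂ ⊂ B ∧ ∀ C ∈ F, A₂ ⊂ C → C ⊂ B → False) →
        A₁ = A₂ := by
  intro B _ hxB A₁ hA₁ hx₁ A₂ hA₂ hx₂ h₁ h₂
  have hunion : A₁ ∪ A₂ ⊂ B :=
    Set.ssubset_iff_subset_ne.2 ⟨Set.union_subset h₁.1.subset h₂.1.subset,
      fun h => (h ▸ hxB).elim hx₁ hx₂⟩
  exact CovByWithin.eq_of_sup_lt (fun _ hA _ hB => hUC _ hA _ hB) hA₁ hA₂ h₁ h₂ hunion

/-- If `F` is union-closed and `x ∈ U_F`, then every member of `F_x` covers at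
most one member of `F_x^c` in the inclusion order on `F`. -/
theorem stmt_12 {α : Type*} (F : Set (Set α))
    (hUC : ∀ A ∈ F, ∀ B ∈ F, A ∪ B ∈ F)
    (x : α) (hx : x ∈ ⋃₀ F) :
    ∀ B ∈ F, x ∈ B →
      ∀ A₁ ∈ F, x ∉ A₁ → ∀ A₂ ∈ F, x ∉ A₂ →
        (A₁ ⊂ B ∧ ∀ C ∈ F, A₁ ⊂ C → C ⊂ B → False) →
        (A₂ ⊂ B ∧ ∀ C ∈ F, A₂ ⊂ C → C ⊂ B → False) →
        A₁ = A₂ :=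
  stmt_12_general F hUC x
end

section
/- Let F be a union-closed family and x ∈ U_F. If every A ∈ F_x^c has an x-cover (some B ∈ F_x covering A in the inclusion order on F), then x is abundant in F: there is an injection F_x^c → F_x. -/
def IsCoverIn {α : Type*} (F : Set (Set α)) (A B : Set α) : Prop :=
  B ∈ F ∧ A ⊂ B ∧ ∀ C ∈ F, A ⊂ C → ¬C ⊂ B

theorem IsCoverIn.subset_of_union_ne {α : Type*} {F : Set (Set α)}
    (hUC : ∀ A ∈ F, ∀ B ∈ F, A ∪ B ∈ F) {A₁ A₂ B : Set α}
    (hA₁ : A₁ ∈ F) (hA₂ : A₂ ∈ F) (hcov : IsCoverIn F A₁ B) (hA₂B : A₂ ⊆ B)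
    (hne : A₁ ∪ A₂ ≠ B) : A₂ ⊆ A₁ := by
  obtain ⟨-, hA₁B, hmin⟩ := hcov
  by_contra hA₂A₁
  have hlow : A₁ ⊂ A₁ ∪ A₂ :=
    Set.ssubset_iff_subset_ne.2
      ⟨Set.subset_union_left, fun h => hA₂A₁ (h ▸ Set.subset_union_right)⟩
  have hup : A₁ ∪ A₂ ⊂ B :=
    Set.ssubset_iff_subset_ne.2 ⟨Set.union_subset hA₁B.subset hA₂B, hne⟩
  exact hmin _ (hUC _ hA₁ _ hA₂) hlow hup

/-- `A₁ ∪ A₂ ∈ F` avoids `x`, so it lies strictly below the common cover; minimality of the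
cover then forces it to equal both `A₁` and `A₂`. -/
theorem IsCoverIn.eq_of_notMem_of_mem {α : Type*} {F : Set (Set α)}
    (hUC : ∀ A ∈ F, ∀ B ∈ F, A ∪ B ∈ F) {x : α} {A₁ A₂ B : Set α}
    (hA₁ : A₁ ∈ F) (hA₂ : A₂ ∈ F) (hx₁ : x ∉ A₁) (hx₂ : x ∉ A₂) (hxB : x ∈ B)
    (h₁ : IsCoverIn F A₁ B) (h₂ : IsCoverIn F A₂ B) : A₁ = A₂ := by
  have hne : ∀ {A A' : Set α}, x ∉ A → x ∉ A' → A ∪ A' ≠ B := by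
    rintro A A' hA hA' rfl
    exact hxB.elim hA hA'
  exact (h₂.subset_of_union_ne hUC hA₂ hA₁ h₁.2.1.subset (hne hx₂ hx₁)).antisymm
    (h₁.subset_of_union_ne hUC hA₁ hA₂ h₂.2.1.subset (hne hx₁ hx₂))

theorem stmt_13_general {α : Type*} (F : Set (Set α))
    (hUC : ∀ A ∈ F, ∀ B ∈ F, A ∪ B ∈ F)
    (x : α)
    (hcov : ∀ A ∈ F, x ∉ A → ∃ B ∈ F, x ∈ B ∧ A ⊂ B ∧
      ∀ C ∈ F, A ⊂ C → C ⊂ B → False) :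
    ∃ f : {A : Set α // A ∈ F ∧ x ∉ A} → {A : Set α // A ∈ F ∧ x ∈ A},
      Function.Injective f := by
  choose B hBF hxB hAB hmin using hcov
  have hcover : ∀ A hA hx, IsCoverIn F A (B A hA hx) := fun A hA hx =>
    ⟨hBF A hA hx, hAB A hA hx, hmin A hA hx⟩
  refine ⟨fun A => ⟨B A.1 A.2.1 A.2.2, hBF _ _ _, hxB _ _ _⟩, ?_⟩
  rintro ⟨A₁, hA₁, hx₁⟩ ⟨A₂, hA₂, hx₂⟩ h
  have hB : B A₁ hA₁ hx₁ = B A₂ hA₂ hx₂ := congrArg Subtype.val h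
  exact Subtype.ext <| IsCoverIn.eq_of_notMem_of_mem hUC hA₁ hA₂ hx₁ hx₂ (hxB A₁ hA₁ hx₁)
    (hcover A₁ hA₁ hx₁) (hB ▸ hcover A₂ hA₂ hx₂)

/-- If `F` is union-closed, `x ∈ U_F`, and every `A ∈ F_x^c` has an `x`-cover,
then `x` is abundant in `F`. -/
theorem stmt_13 {α : Type*} (F : Set (Set α))
    (hUC : ∀ A ∈ F, ∀ B ∈ F, A ∪ B ∈ F)
    (x : α) (hx : x ∈ ⋃₀ F)
    (hcov : ∀ A ∈ F, x ∉ A → ∃ B ∈ F, x ∈ B ∧ A ⊂ B ∧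
      ∀ C ∈ F, A ⊂ C → C ⊂ B → False) :
    ∃ f : {A : Set α // A ∈ F ∧ x ∉ A} → {A : Set α // A ∈ F ∧ x ∈ A},
      Function.Injective f :=
  stmt_13_general F hUC x hcov
end

section
/- Let F be a separating union-closed family containing an element x ∈ U_F that is optimal in F but not abundant in F. Then |F_x| ≥ 3, |F| ≥ 7, and |U_F| ≥ 3. -/
open Cardinal

private lemma stmt16_three_le_mk {X : Type*} {s : Set X} {a b c : X}
    (ha : a ∈ s) (hb : b ∈ s) (hc : c ∈ s)
    (hab : a ≠ b) (hac : a ≠ c) (hbc : b ≠ c) : 3 ≤ #↥s := by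
  have hsub : ({a, b, c} : Set X) ⊆ s := by
    intro y hy
    simp only [Set.mem_insert_iff, Set.mem_singleton_iff] at hy
    rcases hy with rfl | rfl | rfl <;> assumption
  refine le_trans ?_ (Cardinal.mk_le_mk_of_subset hsub)
  have h1 : a ∉ ({b, c} : Set X) := by simp [hab, hac]
  have h2 : b ∉ ({c} : Set X) := by simp [hbc]
  rw [Cardinal.mk_insert h1, Cardinal.mk_insert h2, Cardinal.mk_singleton]
  norm_num

private lemma stmt16_pair_le_two {X : Type*} (u v : X) : #↥({u, v} : Set X) ≤ 2 := by
  by_cases h : u = v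
  · subst h
    rw [Set.pair_eq_singleton, Cardinal.mk_singleton]
    norm_num
  · rw [Cardinal.mk_insert (by simpa using h), Cardinal.mk_singleton]
    norm_num

/-- If `F` is a separating union-closed family with an optimal but not abundant
element `x ∈ U_F`, then `|F_x| ≥ 3`, `|F| ≥ 7`, and `|U_F| ≥ 3`. -/
theorem stmt_16 {α : Type*} (F : Set (Set α))
    (hUC : ∀ A ∈ F, ∀ B ∈ F, A ∪ B ∈ F)
    (hsep : ∀ x ∈ ⋃₀ F, ∀ y ∈ ⋃₀ F,
      {A ∈ F | x ∈ A} = {A ∈ F | y ∈ A} → x = y)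
    (x : α) (hx : x ∈ ⋃₀ F)
    (hopt : ∀ y ∈ ⋃₀ F, {A ∈ F | x ∈ A} ⊆ {A ∈ F | y ∈ A} →
      {A ∈ F | y ∈ A} = {A ∈ F | x ∈ A})
    (hnab : ¬ ∃ f : {A : Set α // A ∈ F ∧ x ∉ A} → {A : Set α // A ∈ F ∧ x ∈ A},
      Function.Injective f) :
    3 ≤ Cardinal.mk {A : Set α // A ∈ F ∧ x ∈ A} ∧
    7 ≤ Cardinal.mk F ∧
    3 ≤ Cardinal.mk (⋃₀ F : Set α) := by
  classical
  set Sx : Set (Set α) := {A | A ∈ F ∧ x ∈ A} with hSxdef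
  set Sc : Set (Set α) := {A | A ∈ F ∧ x ∉ A} with hScdef
  -- not abundant: |Sx| < |Sc|
  have hTS : #↥Sx < #↥Sc := by
    rw [← not_le]
    intro h
    rw [Cardinal.le_def] at h
    obtain ⟨e⟩ := h
    exact hnab ⟨e, e.injective⟩
  obtain ⟨A0, hA0F, hxA0⟩ := hx
  have hA0 : A0 ∈ Sx := ⟨hA0F, hxA0⟩
  have hxU : x ∈ ⋃₀ F := ⟨A0, hA0F, hxA0⟩
  -- main claim: 3 ≤ |Sx|
  have h3T : 3 ≤ #↥Sx := by
    by_contra h3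
    have h2 : ∀ a ∈ Sx, ∀ b ∈ Sx, ∀ c ∈ Sx, a = b ∨ a = c ∨ b = c := by
      by_contra hcon
      push_neg at hcon
      obtain ⟨a, ha, b, hb, c, hc, hab, hac, hbc⟩ := hcon
      exact h3 (stmt16_three_le_mk ha hb hc hab hac hbc)
    -- key structural fact
    have key : ∀ A B : Set α, A ∈ Sx → B ∈ Sx → A ⊆ B → Sx ⊆ ({A, B} : Set (Set α)) →
        A = {x} ∧ Sc ⊆ ({∅, B \ {x}} : Set (Set α)) := by
      intro A B hA hB hABsub hsub2
      have hAeq : A = {x} := by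
        apply Set.eq_singleton_iff_unique_mem.mpr
        refine ⟨hA.2, fun y hy => ?_⟩
        have hyU : y ∈ ⋃₀ F := ⟨A, hA.1, hy⟩
        have hxy : {C | C ∈ F ∧ x ∈ C} ⊆ {C | C ∈ F ∧ y ∈ C} := by
          intro C hC
          have hC2 := hsub2 hC
          simp only [Set.mem_insert_iff, Set.mem_singleton_iff] at hC2
          rcases hC2 with rfl | rfl
          · exact ⟨hA.1, hy⟩
          · exact ⟨hB.1, hABsub hy⟩
        exact hsep y hyU x hxU (hopt y hyU hxy)
      subst hAeq
      refine ⟨rfl, ?_⟩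
      intro C hC
      have hCA : C ∪ {x} ∈ Sx := ⟨hUC C hC.1 {x} hA.1, Or.inr rfl⟩
      have hcase := hsub2 hCA
      simp only [Set.mem_insert_iff, Set.mem_singleton_iff] at hcase ⊢
      rcases hcase with h | h
      · left
        apply Set.eq_empty_iff_forall_notMem.mpr
        intro y hy
        have hyx : y ∈ ({x} : Set α) := h ▸ (Set.mem_union_left _ hy)
        rcases hyx with rfl
        exact hC.2 hy
      · right
        ext y
        constructor
        · intro hy
          refine ⟨h ▸ (Set.mem_union_left _ hy), fun hyx => ?_⟩
          rcases hyx with rfl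
          exact hC.2 hy
        · rintro ⟨hyB, hyx⟩
          have : y ∈ C ∪ {x} := h.symm ▸ hyB
          rcases this with hy | hy
          · exact hy
          · exact absurd hy hyx
    by_cases hex : ∃ A1 ∈ Sx, A1 ≠ A0
    · obtain ⟨A1, hA1, hne⟩ := hex
      have hUmem : A0 ∪ A1 ∈ Sx := ⟨hUC A0 hA0F A1 hA1.1, Or.inl hxA0⟩
      have hsub2 : Sx ⊆ ({A0, A1} : Set (Set α)) := by
        intro C hC
        rcases h2 C hC A0 hA0 A1 hA1 with h | h | h
        · exact Or.inl h
        · exact Or.inr h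
        · exact absurd h.symm hne
      have hT2 : (2 : Cardinal) ≤ #↥Sx := by
        rw [Cardinal.two_le_iff]
        exact ⟨⟨A1, hA1⟩, ⟨A0, hA0⟩, by simpa [Subtype.ext_iff] using hne⟩
      have hScsub : ∃ D : Set α, Sc ⊆ ({∅, D} : Set (Set α)) := by
        have hcases := hsub2 hUmem
        simp only [Set.mem_insert_iff, Set.mem_singleton_iff] at hcases
        rcases hcases with h | h
        · have hsub' : A1 ⊆ A0 := by rw [← h]; exact Set.subset_union_right
          have hsub2' : Sx ⊆ ({A1, A0} : Set (Set α)) := by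
            rw [Set.pair_comm]; exact hsub2
          exact ⟨A0 \ {x}, (key A1 A0 hA1 hA0 hsub' hsub2').2⟩
        · have hsub' : A0 ⊆ A1 := by rw [← h]; exact Set.subset_union_left
          exact ⟨A1 \ {x}, (key A0 A1 hA0 hA1 hsub' hsub2).2⟩
      obtain ⟨D, hD⟩ := hScsub
      have hS2 : #↥Sc ≤ 2 :=
        le_trans (Cardinal.mk_le_mk_of_subset hD) (stmt16_pair_le_two _ _)
      exact absurd (lt_of_lt_of_le hTS hS2) (not_lt.mpr hT2)
    · push_neg at hex
      have hsub2 : Sx ⊆ ({A0, A0} : Set (Set α)) := fun C hC => Or.inl (hex C hC)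
      obtain ⟨hAeq, hScsub⟩ := key A0 A0 hA0 hA0 subset_rfl hsub2
      have hone : Sc ⊆ ({∅} : Set (Set α)) := by
        intro C hC
        have := hScsub hC
        simp only [Set.mem_insert_iff, Set.mem_singleton_iff] at this ⊢
        rcases this with h | h
        · exact h
        · simp [h, hAeq]
      have hS1 : #↥Sc ≤ 1 := by
        refine le_trans (Cardinal.mk_le_mk_of_subset hone) ?_
        rw [Cardinal.mk_singleton]
      have hT1 : (1 : Cardinal) ≤ #↥Sx := by
        have : Nonempty ↥Sx := ⟨⟨A0, hA0⟩⟩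
        exact Cardinal.one_le_iff_ne_zero.mpr (Cardinal.mk_ne_zero _)
      exact absurd (lt_of_lt_of_le hTS hS1) (not_lt.mpr hT1)
  -- |F| ≥ 7
  have hS4 : (4 : Cardinal) ≤ #↥Sc := by
    have h3lt : ((3 : ℕ) : Cardinal) < #↥Sc := by
      refine lt_of_le_of_lt ?_ hTS
      exact_mod_cast h3T
    have := Cardinal.natCast_add_one_le_iff.mpr h3lt
    exact_mod_cast this
  have hunion : Sx ∪ Sc = F := by
    ext A
    constructor
    · rintro (⟨h, -⟩ | ⟨h, -⟩) <;> exact h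
    · intro h
      by_cases hxA : x ∈ A
      · exact Or.inl ⟨h, hxA⟩
      · exact Or.inr ⟨h, hxA⟩
  have hdisj : Disjoint Sx Sc := by
    rw [Set.disjoint_left]
    rintro A ⟨-, hxA⟩ ⟨-, hxA'⟩
    exact hxA' hxA
  have hFcard : #↥F = #↥Sx + #↥Sc := by
    rw [← hunion, Cardinal.mk_union_of_disjoint hdisj]
  have h7F : (7 : Cardinal) ≤ #↥F := by
    rw [hFcard]
    calc (7 : Cardinal) = 3 + 4 := by norm_num
    _ ≤ #↥Sx + #↥Sc := add_le_add h3T hS4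
  -- |U_F| ≥ 3
  have h3U : (3 : Cardinal) ≤ #↥(⋃₀ F) := by
    by_contra hU3
    have hUlt : #↥(⋃₀ F) < ((3 : ℕ) : Cardinal) := by exact_mod_cast not_le.mp hU3
    have hfin : #↥(⋃₀ F) < Cardinal.aleph0 := hUlt.trans (Cardinal.nat_lt_aleph0 3)
    obtain ⟨n, hn⟩ := Cardinal.lt_aleph0.mp hfin
    have hn3 : n < 3 := by rw [hn] at hUlt; exact_mod_cast hUlt
    have hU2 : #↥(⋃₀ F) ≤ 2 := by
      rw [hn]
      exact_mod_cast Nat.lt_succ_iff.mp hn3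
    have hinj : #↥F ≤ #(Set ↥(⋃₀ F)) := by
      refine Cardinal.mk_le_of_injective
        (f := fun A : ↥F => {y : ↥(⋃₀ F) | (y : α) ∈ (A : Set α)}) ?_
      intro A B hAB
      apply Subtype.ext
      ext a
      constructor
      · intro ha
        have haU : a ∈ ⋃₀ F := ⟨A, A.2, ha⟩
        have h1 : (⟨a, haU⟩ : ↥(⋃₀ F)) ∈ {y : ↥(⋃₀ F) | (y : α) ∈ (A : Set α)} := ha
        exact (Set.ext_iff.mp hAB ⟨a, haU⟩).mp h1
      · intro ha
        have haU : a ∈ ⋃₀ F := ⟨B, B.2, ha⟩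
        have h1 : (⟨a, haU⟩ : ↥(⋃₀ F)) ∈ {y : ↥(⋃₀ F) | (y : α) ∈ (B : Set α)} := ha
        exact (Set.ext_iff.mp hAB ⟨a, haU⟩).mpr h1
    have hle4 : #↥F ≤ 4 := by
      refine hinj.trans ?_
      rw [Cardinal.mk_set]
      calc (2 : Cardinal) ^ #↥(⋃₀ F) ≤ 2 ^ (2 : Cardinal) :=
            Cardinal.power_le_power_left (by norm_num) hU2
      _ = 4 := by norm_cast
    have : (7 : Cardinal) ≤ 4 := h7F.trans hle4
    norm_num at this
  exact ⟨h3T, h7F, h3U⟩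
end

section
/- Let (X, τ) be a topological space such that τ ≠ {∅} and (τ, ⊆) satisfies the descending chain condition (every nonempty collection of open sets has a minimal element). Then there exists x ∈ X that is abundant in τ, i.e., there is an injection from {U ∈ τ : x ∉ U} into {U ∈ τ : x ∈ U}. -/
/-!
Take a minimal nonempty open set `M` (it exists by DCC) and a point `x ∈ M`. An open set `U`
meeting `M` contains `M`, since `U ∩ M` is a nonempty open subset of `M`; so an open set missing
`x` is disjoint from `M`, and `U ↦ U ∪ M` injects the open sets missing `x` into those containing
`x`, with inverse `V ↦ V \ M`.
-/

open Set

section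

variable {X : Type*} [TopologicalSpace X]

theorem exists_isOpen_nonempty_of_ne_singleton_empty
    (hne : {U : Set X | IsOpen U} ≠ {∅}) : ∃ U : Set X, IsOpen U ∧ U.Nonempty := by
  by_contra! h
  exact hne <| eq_singleton_iff_unique_mem.2 ⟨isOpen_empty, fun U hU => h U hU⟩

theorem subset_of_minimal_isOpen_nonempty {M U : Set X}
    (hM : Minimal (fun V : Set X => IsOpen V ∧ V.Nonempty) M) (hU : IsOpen U)
    (hUM : (U ∩ M).Nonempty) : M ⊆ U :=
  (hM.eq_of_subset ⟨hU.inter hM.prop.1, hUM⟩ inter_subset_right).symm ▸ inter_subset_left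

theorem disjoint_of_minimal_isOpen_nonempty {M U : Set X} {x : X}
    (hM : Minimal (fun V : Set X => IsOpen V ∧ V.Nonempty) M) (hxM : x ∈ M) (hU : IsOpen U)
    (hxU : x ∉ U) : Disjoint U M := by
  rw [disjoint_iff_inter_eq_empty, ← not_nonempty_iff_eq_empty]
  exact fun hUM => hxU (subset_of_minimal_isOpen_nonempty hM hU hUM hxM)

end

theorem Set.injOn_union_right_of_disjoint {α : Type*} (M : Set α) :
    InjOn (· ∪ M) {U | Disjoint U M} := fun U hU V hV hUV => by
  rw [← hU.sup_sdiff_cancel_right, ← hV.sup_sdiff_cancel_right]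
  exact congrArg (· \ M) hUV

/-- If `(X, τ)` is a topological space with `τ ≠ {∅}` whose open sets satisfy
DCC, then some `x ∈ X` is abundant in `τ`. -/
theorem stmt_17 {X : Type*} [TopologicalSpace X]
    (hne : {U : Set X | IsOpen U} ≠ {∅})
    (hDCC : ∀ S ⊆ {U : Set X | IsOpen U}, S.Nonempty →
      ∃ M ∈ S, ∀ V ∈ S, V ⊆ M → V = M) :
    ∃ x : X, ∃ f : {U : Set X // IsOpen U ∧ x ∉ U} → {U : Set X // IsOpen U ∧ x ∈ U},
      Function.Injective f := by
  obtain ⟨M, ⟨hMopen, hMne⟩, hMmin⟩ := hDCC {U | IsOpen U ∧ U.Nonempty} (fun _ hU => hU.1)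
    (exists_isOpen_nonempty_of_ne_singleton_empty hne)
  have hM : Minimal (fun V : Set X => IsOpen V ∧ V.Nonempty) M :=
    ⟨⟨hMopen, hMne⟩, fun V hV hVM => (hMmin V hV hVM).ge⟩
  obtain ⟨x, hxM⟩ := hMne
  refine ⟨x, fun U => ⟨U.1 ∪ M, U.2.1.union hMopen, Or.inr hxM⟩, fun U V hUV => Subtype.ext ?_⟩
  exact injOn_union_right_of_disjoint M
    (disjoint_of_minimal_isOpen_nonempty hM hxM U.2.1 U.2.2)
    (disjoint_of_minimal_isOpen_nonempty hM hxM V.2.1 V.2.2) (congrArg Subtype.val hUV)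
end

section
/- Let T be a union-closed α-tent for some cardinal α > 1 (i.e., T consists of α pairwise incomparable nonempty minimal sets together with one greatest set U_T containing them all, and T is closed under binary unions), and let F be any family of sets such that every nonempty member of F contains some member of T. Then F ∪ T has an abundant element: there exists x ∈ U_T and an injection from {A ∈ F ∪ T : x ∉ A} into {A ∈ F ∪ T : x ∈ A}. -/
/-!
Two distinct minimal sets `A₁, A₂` of the tent are incomparable, and union-closedness forces
`A₁ ∪ S = U` for every minimal `S ≠ A₁`. Hence for `x ∈ A₂ \ A₁` and `y ∈ A₁ \ A₂` every member
of `T`, and by domination every nonempty member of `F ∪ T`, contains `x` or `y`. In such a family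
`S ↦ S` (with `∅ ↦ U`) injects the sets missing `y` into the sets containing `x`; composing with
an injection between the sets missing `x` and those missing `y`, which exists in one direction
or the other, makes `x` or `y` abundant.
-/

open Cardinal

section Abundance

variable {α : Type*} {G : Set (Set α)} {U : Set α} {x y : α}

lemma mk_notMem_le_mk_mem_of_cover (hU : U ∈ G) (hxU : x ∈ U) (hyU : y ∈ U)
    (hcover : ∀ S ∈ G, S.Nonempty → x ∈ S ∨ y ∈ S) :
    #{S // S ∈ G ∧ y ∉ S} ≤ #{S // S ∈ G ∧ x ∈ S} := by
  classical
  have hx_of_ne (S : {S // S ∈ G ∧ y ∉ S}) (h : (S : Set α) ≠ ∅) : x ∈ (S : Set α) :=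
    (hcover S S.2.1 (Set.nonempty_iff_ne_empty.mpr h)).resolve_right S.2.2
  refine mk_le_of_injective (f := fun S =>
    if h : (S : Set α) = ∅ then ⟨U, hU, hxU⟩ else ⟨S, S.2.1, hx_of_ne S h⟩) ?_
  intro S S' hSS'
  have hU_ne (S : {S // S ∈ G ∧ y ∉ S}) : (S : Set α) ≠ U := fun h => S.2.2 (h ▸ hyU)
  by_cases h : (S : Set α) = ∅ <;> by_cases h' : (S' : Set α) = ∅ <;>
    simp only [h, h', dite_true, dite_false, Subtype.mk.injEq] at hSS'
  · exact Subtype.ext (h.trans h'.symm)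
  · exact absurd hSS'.symm (hU_ne S')
  · exact absurd hSS' (hU_ne S)
  · exact Subtype.ext hSS'

lemma exists_abundant_of_cover (hU : U ∈ G) (hxU : x ∈ U) (hyU : y ∈ U)
    (hcover : ∀ S ∈ G, S.Nonempty → x ∈ S ∨ y ∈ S) :
    ∃ z ∈ U, ∃ f : {S // S ∈ G ∧ z ∉ S} → {S // S ∈ G ∧ z ∈ S}, Function.Injective f := by
  have hcover' : ∀ S ∈ G, S.Nonempty → y ∈ S ∨ x ∈ S := fun S hS hne => (hcover S hS hne).symm
  rcases le_total #{S // S ∈ G ∧ x ∉ S} #{S // S ∈ G ∧ y ∉ S} with h | h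
  · obtain ⟨f⟩ := le_def _ _ |>.mp (h.trans (mk_notMem_le_mk_mem_of_cover hU hxU hyU hcover))
    exact ⟨x, hxU, f, f.injective⟩
  · obtain ⟨f⟩ := le_def _ _ |>.mp (h.trans (mk_notMem_le_mk_mem_of_cover hU hyU hxU hcover'))
    exact ⟨y, hyU, f, f.injective⟩

lemma cover_union_of_dominates {F T : Set (Set α)} (hT : ∀ S ∈ T, x ∈ S ∨ y ∈ S)
    (hdom : ∀ A ∈ F, A.Nonempty → ∃ B ∈ T, B ⊆ A) :
    ∀ S ∈ F ∪ T, S.Nonempty → x ∈ S ∨ y ∈ S := by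
  rintro S (hSF | hST) hne
  · obtain ⟨B, hBT, hBS⟩ := hdom S hSF hne
    exact (hT B hBT).imp (@hBS x) (@hBS y)
  · exact hT S hST

end Abundance

section Tent

variable {α : Type*} {M : Set (Set α)} {U : Set α}

lemma union_eq_of_tent (hanti : ∀ A ∈ M, ∀ B ∈ M, A ⊆ B → A = B)
    (hUC : ∀ A ∈ insert U M, ∀ B ∈ insert U M, A ∪ B ∈ insert U M)
    {A B : Set α} (hA : A ∈ M) (hB : B ∈ M) (hAB : A ≠ B) : A ∪ B = U := by
  rcases hUC A (Or.inr hA) B (Or.inr hB) with h | h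
  · exact h
  · exact absurd ((hanti A hA _ h Set.subset_union_left).trans
      (hanti B hB _ h Set.subset_union_right).symm) hAB

lemma exists_cover_of_tent (hM : M.Nontrivial) (hsub : ∀ A ∈ M, A ⊆ U)
    (hanti : ∀ A ∈ M, ∀ B ∈ M, A ⊆ B → A = B)
    (hUC : ∀ A ∈ insert U M, ∀ B ∈ insert U M, A ∪ B ∈ insert U M) :
    ∃ x ∈ U, ∃ y ∈ U, ∀ S ∈ insert U M, x ∈ S ∨ y ∈ S := by
  obtain ⟨A₁, hA₁, A₂, hA₂, hne⟩ := hM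
  obtain ⟨x, hxA₂, hxA₁⟩ := Set.not_subset.mp fun h => hne (hanti A₂ hA₂ A₁ hA₁ h).symm
  obtain ⟨y, hyA₁, -⟩ := Set.not_subset.mp fun h => hne (hanti A₁ hA₁ A₂ hA₂ h)
  have hxU := hsub A₂ hA₂ hxA₂
  refine ⟨x, hxU, y, hsub A₁ hA₁ hyA₁, ?_⟩
  rintro S (rfl | hS)
  · exact Or.inl hxU
  by_cases hSA₁ : S = A₁
  · exact Or.inr (hSA₁ ▸ hyA₁)
  · have hx : x ∈ A₁ ∪ S := union_eq_of_tent hanti hUC hA₁ hS (Ne.symm hSA₁) ▸ hxU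
    exact Or.inl (hx.resolve_left hxA₁)

end Tent

/-- Let `T` be a union-closed `α`-tent for some cardinal `α > 1`: `T` consists
of a set `M` of pairwise incomparable nonempty minimal sets (with `|M| > 1`)
together with a single greatest set `U` containing them all. If every nonempty
member of a family `F` contains some member of `T`, then `F ∪ T` has an
abundant element chosen from `U`. -/
theorem stmt_19 {α : Type*} (T F : Set (Set α)) (M : Set (Set α)) (U : Set α)
    (hT : T = insert U M)
    (hcard : 1 < Cardinal.mk M)
    (hmin : ∀ A ∈ M, A.Nonempty ∧ A ⊆ U ∧ A ≠ U)
    (hanti : ∀ A ∈ M, ∀ B ∈ M, A ⊆ B → A = B)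
    (hTUC : ∀ A ∈ T, ∀ B ∈ T, A ∪ B ∈ T)
    (hdom : ∀ A ∈ F, A.Nonempty → ∃ B ∈ T, B ⊆ A) :
    ∃ x ∈ U,
      ∃ f : {A : Set α // A ∈ F ∪ T ∧ x ∉ A} → {A : Set α // A ∈ F ∪ T ∧ x ∈ A},
        Function.Injective f := by
  subst hT
  have hM : M.Nontrivial := Set.nontrivial_coe_sort.mp (one_lt_iff_nontrivial.mp hcard)
  obtain ⟨x, hxU, y, hyU, hcover⟩ :=
    exists_cover_of_tent hM (fun A hA => (hmin A hA).2.1) hanti hTUC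
  exact exists_abundant_of_cover (Or.inr (Set.mem_insert U M)) hxU hyU
    (cover_union_of_dominates hcover hdom)
end
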